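/- For every β ∈ (1, 2], the function x ↦ W_{2,β}(x) = K̃_{2,β}(e^x) satisfies W_{2,β}''(x) ≥ 0 for every x > 0; i.e., W_{2,β} is convex on (0, ∞). Equivalently, for every s > 1, s² K̃_{2,β}''(s) + s K̃_{2,β}'(s) ≥ 0. -/

import Mathlib

open Real Set

/-- The kernel `K̃_{2,β}(s)` from (4.14). -/
noncomputable def Ktilde2 (β s : ℝ) : ℝ :=
  (β / 2) * ((s ^ ((β - 1) / 2) + s ^ (-((β - 1) / 2))) * Real.log |(s + 1) / (s - 1)|
    - 2 * s * (s ^ ((β - 1) / 2) - s ^ (-((β - 1) / 2))) / (s ^ 2 - 1))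

/-- `W_{2,β}(x) = K̃_{2,β}(e^x)`. -/
noncomputable def W2 (β x : ℝ) : ℝ := Ktilde2 β (Real.exp x)

/-!
Put `a = (β - 1) / 2`. In the variable `x = log s` the kernel is hyperbolic:
`W_{2,β}(x) = β (cosh (a x) ℓ(x) - sinh (a x) / sinh x)` with `ℓ(x) = log coth (x / 2)`,
and `ℓ' = -1 / sinh`. Differentiating twice gives
`sinh³ x · W''(x) / β = cosh (a x) X - sinh (a x) Y` with `X, Y ≥ 0`.
As `a ≤ 1/2`, `tanh (a x) ≤ tanh (x / 2)`, so it suffices that `cosh (x / 2) X ≥ sinh (x / 2) Y`;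
by `cosh² - sinh² = 1` this reduces to `2 cosh² (x / 2) ℓ(x) ≥ 1`,
which follows from `log y ≥ 1 - 1 / y` at `y = coth (x / 2)`.
The statement about `K̃_{2,β}` is the same one, since `s² K'' + s K' = W''(log s)`.
-/

open Filter Topology

lemma deriv_deriv_eq_of_hasDerivAt {f f' : ℝ → ℝ} {x f'' : ℝ}
    (hf : ∀ᶠ y in 𝓝 x, HasDerivAt f (f' y) y) (hf' : HasDerivAt f' f'' x) :
    deriv (deriv f) x = f'' := by
  rw [EventuallyEq.deriv_eq (hf.mono fun y hy => hy.deriv)]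
  exact hf'.deriv

lemma sq_mul_deriv_deriv_add_mul_deriv_of_eq_comp_log {g f f' : ℝ → ℝ} {s f'' : ℝ}
    (hs : 0 < s) (hg : ∀ t, 0 < t → g t = f (log t))
    (hf : ∀ᶠ y in 𝓝 (log s), HasDerivAt f (f' y) y) (hf' : HasDerivAt f' f'' (log s)) :
    s ^ 2 * deriv (deriv g) s + s * deriv g s = f'' := by
  have hg' : ∀ᶠ t in 𝓝 s, HasDerivAt g (f' (log t) * t⁻¹) t := by
    filter_upwards [(continuousAt_log hs.ne').eventually hf, Ioi_mem_nhds hs]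
      with t ht (ht0 : 0 < t)
    refine (ht.comp t (hasDerivAt_log ht0.ne')).congr_of_eventuallyEq ?_
    filter_upwards [Ioi_mem_nhds ht0] with u hu using hg u hu
  have hg'' := (hf'.comp s (hasDerivAt_log hs.ne')).mul (hasDerivAt_inv hs.ne')
  rw [deriv_deriv_eq_of_hasDerivAt hg' hg'', hg'.self_of_nhds.deriv, Function.comp_apply]
  field_simp
  ring

noncomputable def logCothHalf (x : ℝ) : ℝ := log (cosh (x / 2) / sinh (x / 2))

lemma hasDerivAt_logCothHalf {x : ℝ} (hx : x ≠ 0) :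
    HasDerivAt logCothHalf (-1 / sinh x) x := by
  have hp : sinh (x / 2) ≠ 0 := by simpa using hx
  have hhalf : HasDerivAt (fun y : ℝ => y / 2) (1 / 2) x := (hasDerivAt_id x).div_const 2
  have h := (((hasDerivAt_cosh _).comp x hhalf).div ((hasDerivAt_sinh _).comp x hhalf) hp).log
    (div_ne_zero (cosh_pos _).ne' hp)
  refine h.congr_deriv ?_
  simp only [Function.comp_apply, Pi.div_apply]
  rw [show sinh x = sinh (2 * (x / 2)) by ring_nf, sinh_two_mul]
  field_simp
  linear_combination -cosh_sq (x / 2)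

lemma inv_two_mul_cosh_half_sq_le_logCothHalf {x : ℝ} (hx : 0 < x) :
    (2 * cosh (x / 2) ^ 2)⁻¹ ≤ logCothHalf x := by
  have hp : 0 < sinh (x / 2) := sinh_pos_iff.mpr (by linarith)
  have hq := cosh_pos (x / 2)
  calc (2 * cosh (x / 2) ^ 2)⁻¹
      ≤ 1 - (cosh (x / 2) / sinh (x / 2))⁻¹ := by
        have h : 1 - (cosh (x / 2) / sinh (x / 2))⁻¹ - (2 * cosh (x / 2) ^ 2)⁻¹
            = (cosh (x / 2) - sinh (x / 2)) ^ 2 / (2 * cosh (x / 2) ^ 2) := by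
          field_simp
          linear_combination cosh_sq (x / 2)
        have : 0 ≤ (cosh (x / 2) - sinh (x / 2)) ^ 2 / (2 * cosh (x / 2) ^ 2) := by positivity
        linarith
    _ ≤ logCothHalf x := one_sub_inv_le_log_of_pos (div_pos hq hp)

noncomputable def hypKernel (a x : ℝ) : ℝ :=
  cosh (a * x) * logCothHalf x - sinh (a * x) / sinh x

noncomputable def hypKernelDeriv (a x : ℝ) : ℝ :=
  a * sinh (a * x) * logCothHalf x - (1 + a) * cosh (a * x) / sinh x
    + sinh (a * x) * cosh x / sinh x ^ 2

noncomputable def hypKernelDeriv2 (a x : ℝ) : ℝ :=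
  a ^ 2 * cosh (a * x) * logCothHalf x - a * (2 + a) * sinh (a * x) / sinh x
    + (1 + 2 * a) * cosh (a * x) * cosh x / sinh x ^ 2
    - sinh (a * x) * (1 + cosh x ^ 2) / sinh x ^ 3

lemma hasDerivAt_hypKernel (a : ℝ) {x : ℝ} (hx : x ≠ 0) :
    HasDerivAt (hypKernel a) (hypKernelDeriv a x) x := by
  have hS : sinh x ≠ 0 := by simpa using hx
  have hc := (hasDerivAt_cosh (a * x)).comp x ((hasDerivAt_id x).const_mul a)
  have hs := (hasDerivAt_sinh (a * x)).comp x ((hasDerivAt_id x).const_mul a)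
  refine ((hc.mul (hasDerivAt_logCothHalf hx)).sub
    (hs.div (hasDerivAt_sinh x) hS)).congr_deriv ?_
  simp only [hypKernelDeriv, Function.comp_apply, mul_one]
  field_simp
  ring

lemma hasDerivAt_hypKernelDeriv (a : ℝ) {x : ℝ} (hx : x ≠ 0) :
    HasDerivAt (hypKernelDeriv a) (hypKernelDeriv2 a x) x := by
  have hS : sinh x ≠ 0 := by simpa using hx
  have hc := (hasDerivAt_cosh (a * x)).comp x ((hasDerivAt_id x).const_mul a)
  have hs := (hasDerivAt_sinh (a * x)).comp x ((hasDerivAt_id x).const_mul a)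
  refine ((((hs.const_mul a).mul (hasDerivAt_logCothHalf hx)).sub
    ((hc.const_mul (1 + a)).div (hasDerivAt_sinh x) hS)).add
    ((hs.mul (hasDerivAt_cosh x)).div ((hasDerivAt_sinh x).pow 2)
      (pow_ne_zero 2 hS))).congr_deriv ?_
  simp only [hypKernelDeriv2, Function.comp_apply, Pi.pow_apply, Pi.mul_apply, mul_one]
  field_simp
  linear_combination -(sinh x * sinh (a * x)) * cosh_sq x

lemma W2_eq_hypKernel (β x : ℝ) : W2 β x = β * hypKernel ((β - 1) / 2) x := by
  rcases eq_or_ne x 0 with rfl | hx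
  · simp [W2, Ktilde2, hypKernel, logCothHalf]
  have hpow (a : ℝ) : exp x ^ a = exp (a * x) := by
    rw [rpow_def_of_pos (exp_pos x), log_exp, mul_comm]
  have hlog : log |(exp x + 1) / (exp x - 1)| = logCothHalf x := by
    have he : exp x = exp (x / 2) ^ 2 := by rw [← exp_nat_mul]; ring_nf
    have h1 : exp (x / 2) ^ 2 - 1 ≠ 0 := by rw [← he, sub_ne_zero, Ne, exp_eq_one_iff]; exact hx
    rw [log_abs, logCothHalf, cosh_eq, sinh_eq, exp_neg, he]
    field_simp
  have hS : exp x ^ 2 - 1 ≠ 0 := by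
    rw [sub_ne_zero, ← exp_nat_mul, Ne, exp_eq_one_iff]; simpa using hx
  rw [W2, Ktilde2, hpow, hpow, hlog, hypKernel, cosh_eq, sinh_eq, sinh_eq x, neg_mul, exp_neg,
    exp_neg]
  field_simp

lemma hypKernelDeriv2_nonneg {a x : ℝ} (ha₀ : 0 ≤ a) (ha : a ≤ 1 / 2) (hx : 0 < x) :
    0 ≤ hypKernelDeriv2 a x := by
  set p := sinh (x / 2)
  set q := cosh (x / 2)
  set c := cosh (a * x)
  set σ := sinh (a * x)
  set L := logCothHalf x
  have hp : 0 < p := sinh_pos_iff.mpr (by linarith)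
  have hq : 0 < q := cosh_pos _
  have hc : 0 < c := cosh_pos _
  have hqp : q ^ 2 = p ^ 2 + 1 := cosh_sq _
  have hS : sinh x = 2 * p * q := by rw [← sinh_two_mul]; ring_nf
  have hC : cosh x = q ^ 2 + p ^ 2 := by rw [← cosh_two_mul]; ring_nf
  set X := a ^ 2 * L * sinh x ^ 3 + (1 + 2 * a) * cosh x * sinh x
  set Y := a * (2 + a) * sinh x ^ 2 + 1 + cosh x ^ 2
  have hsplit :
      q * sinh x ^ 3 * hypKernelDeriv2 a x = c * (q * X - p * Y) + (c * p - σ * q) * Y := by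
    rw [hypKernelDeriv2]
    field_simp
    ring
  have hXY : q * X - p * Y =
      2 * p * (2 * a ^ 2 * p ^ 2 * q ^ 2 * (2 * q ^ 2 * L - 1) + 2 * a * q ^ 2 + p ^ 2) := by
    simp only [X, Y, hS, hC]
    linear_combination (p * (q ^ 2 + p ^ 2 + 1) + 4 * a * p * q ^ 2) * hqp
  have hL : 1 ≤ 2 * q ^ 2 * L := by
    have := inv_two_mul_cosh_half_sq_le_logCothHalf hx
    rw [inv_le_iff_one_le_mul₀ (by positivity)] at this
    linarith
  have htanh : σ * q ≤ c * p := by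
    have := sinh_nonpos_iff.mpr (show a * x - x / 2 ≤ 0 by nlinarith)
    rw [sinh_sub] at this
    linarith
  have hY : 0 ≤ Y := by positivity
  have hpos : 0 ≤ q * sinh x ^ 3 * hypKernelDeriv2 a x := by
    rw [hsplit, hXY]
    have : 0 ≤ 2 * q ^ 2 * L - 1 := by linarith
    have : 0 ≤ c * p - σ * q := by linarith
    positivity
  exact (mul_nonneg_iff_of_pos_left (by positivity)).mp hpos

theorem W2_convex :
    ∀ β ∈ Ioc (1 : ℝ) 2,
      (∀ x : ℝ, 0 < x → 0 ≤ deriv (deriv (W2 β)) x) ∧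
      (∀ s : ℝ, 1 < s →
        0 ≤ s ^ 2 * deriv (deriv (Ktilde2 β)) s + s * deriv (Ktilde2 β) s) := by
  rintro β ⟨hβ₁, hβ₂⟩
  have ha₀ : 0 ≤ (β - 1) / 2 := by linarith
  have ha₁ : (β - 1) / 2 ≤ 1 / 2 := by linarith
  set a := (β - 1) / 2
  have hW : W2 β = fun x => β * hypKernel a x := funext (W2_eq_hypKernel β)
  have hW' : ∀ x > 0, ∀ᶠ y in 𝓝 x, HasDerivAt (W2 β) (β * hypKernelDeriv a y) y := by
    intro x hx
    filter_upwards [Ioi_mem_nhds hx] with y (hy : 0 < y)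
    exact hW ▸ (hasDerivAt_hypKernel a hy.ne').const_mul β
  have hW'' : ∀ x > 0,
      HasDerivAt (fun y => β * hypKernelDeriv a y) (β * hypKernelDeriv2 a x) x :=
    fun x hx => (hasDerivAt_hypKernelDeriv a hx.ne').const_mul β
  have hnonneg : ∀ x > 0, 0 ≤ β * hypKernelDeriv2 a x := fun x hx =>
    mul_nonneg (by linarith) (hypKernelDeriv2_nonneg ha₀ ha₁ hx)
  refine ⟨fun x hx => ?_, fun s hs => ?_⟩
  · rw [deriv_deriv_eq_of_hasDerivAt (hW' x hx) (hW'' x hx)]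
    exact hnonneg x hx
  · have hlog := log_pos hs
    rw [sq_mul_deriv_deriv_add_mul_deriv_of_eq_comp_log (by linarith)
      (fun t ht => by rw [W2, exp_log ht]) (hW' _ hlog) (hW'' _ hlog)]
    exact hnonneg _ hlog
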